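/- arXiv:2309.15312 — 2 statements merged into one kernel-verified Lean document; each statement's English description precedes it below -/
import Mathlib

section
/- Fix real hyperparameters ρ¹ > 0 and ρ⁰ > 0 and define ℓ(c¹, c⁰) := B(c¹ + ρ¹, c⁰ + ρ⁰) / B(ρ¹, ρ⁰). Then for all natural numbers a, b ≥ 0: ℓ(a + b, 0) ≥ ℓ(a, 0) · ℓ(b, 0) and ℓ(0, a + b) ≥ ℓ(0, a) · ℓ(0, b). -/
/-- The Beta function `B(x, y) = Γ(x)Γ(y)/Γ(x+y)`. -/
noncomputable def betaFn (x y : ℝ) : ℝ :=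
  Real.Gamma x * Real.Gamma y / Real.Gamma (x + y)

/-- The leaf count likelihood `ℓ(c¹, c⁰) = B(c¹+ρ¹, c⁰+ρ⁰)/B(ρ¹, ρ⁰)`. -/
noncomputable def leafLik (ρ1 ρ0 : ℝ) (c1 c0 : ℕ) : ℝ :=
  betaFn ((c1 : ℝ) + ρ1) ((c0 : ℝ) + ρ0) / betaFn ρ1 ρ0

lemma gamma_add_nat (x : ℝ) (hx : 0 < x) (n : ℕ) :
    Real.Gamma (x + n) = (∏ k ∈ Finset.range n, (x + k)) * Real.Gamma x := by
  induction n with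
  | zero => simp
  | succ n ih =>
    have hxn : x + n ≠ 0 := by positivity
    have : Real.Gamma (x + (n + 1 : ℕ)) = (x + n) * Real.Gamma (x + n) := by
      push_cast
      rw [show x + ((n : ℝ) + 1) = (x + n) + 1 by ring, Real.Gamma_add_one hxn]
    rw [this, ih, Finset.prod_range_succ]
    ring

lemma leafLik_eq_prod (ρ1 ρ0 : ℝ) (hρ1 : 0 < ρ1) (hρ0 : 0 < ρ0) (n : ℕ) :
    leafLik ρ1 ρ0 n 0 = ∏ k ∈ Finset.range n, ((k : ℝ) + ρ1) / ((k : ℝ) + ρ1 + ρ0) := by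
  have hG1 := Real.Gamma_pos_of_pos hρ1
  have hG0 := Real.Gamma_pos_of_pos hρ0
  have hG10 := Real.Gamma_pos_of_pos (add_pos hρ1 hρ0)
  have h1 : Real.Gamma ((n : ℝ) + ρ1) = (∏ k ∈ Finset.range n, (ρ1 + k)) * Real.Gamma ρ1 := by
    rw [add_comm]; exact gamma_add_nat ρ1 hρ1 n
  have h2 : Real.Gamma ((n : ℝ) + ρ1 + ρ0) =
      (∏ k ∈ Finset.range n, (ρ1 + ρ0 + k)) * Real.Gamma (ρ1 + ρ0) := by
    rw [show (n : ℝ) + ρ1 + ρ0 = (ρ1 + ρ0) + n by ring]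
    exact gamma_add_nat (ρ1 + ρ0) (add_pos hρ1 hρ0) n
  have hp1 : (0 : ℝ) < ∏ k ∈ Finset.range n, (ρ1 + k) :=
    Finset.prod_pos fun k _ => by positivity
  have hp2 : (0 : ℝ) < ∏ k ∈ Finset.range n, (ρ1 + ρ0 + k) :=
    Finset.prod_pos fun k _ => by positivity
  have key : ∏ k ∈ Finset.range n, ((k : ℝ) + ρ1) / ((k : ℝ) + ρ1 + ρ0) =
      (∏ k ∈ Finset.range n, (ρ1 + k)) / (∏ k ∈ Finset.range n, (ρ1 + ρ0 + k)) := by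
    rw [Finset.prod_div_distrib]
    congr 1 <;> exact Finset.prod_congr rfl fun k _ => by ring
  rw [leafLik, betaFn, betaFn, key]
  push_cast
  rw [show (0 : ℝ) + ρ0 = ρ0 by ring, h1, h2]
  field_simp

lemma prod_super (ρ1 ρ0 : ℝ) (hρ1 : 0 < ρ1) (hρ0 : 0 < ρ0) (a b : ℕ) :
    (∏ k ∈ Finset.range (a + b), ((k : ℝ) + ρ1) / ((k : ℝ) + ρ1 + ρ0)) ≥
      (∏ k ∈ Finset.range a, ((k : ℝ) + ρ1) / ((k : ℝ) + ρ1 + ρ0)) *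
      (∏ k ∈ Finset.range b, ((k : ℝ) + ρ1) / ((k : ℝ) + ρ1 + ρ0)) := by
  rw [Finset.prod_range_add]
  have hpa : (0 : ℝ) < ∏ k ∈ Finset.range a, ((k : ℝ) + ρ1) / ((k : ℝ) + ρ1 + ρ0) :=
    Finset.prod_pos fun k _ => by positivity
  apply mul_le_mul_of_nonneg_left _ hpa.le
  apply Finset.prod_le_prod
  · intro k _; positivity
  · intro k _
    rw [div_le_div_iff₀ (by positivity) (by positivity)]
    push_cast
    nlinarith [Nat.cast_nonneg (α := ℝ) a, Nat.cast_nonneg (α := ℝ) k]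

/-- **Lemma 14: supermultiplicativity of pure-leaf likelihoods.**
`ℓ(a+b,0) ≥ ℓ(a,0)·ℓ(b,0)` and `ℓ(0,a+b) ≥ ℓ(0,a)·ℓ(0,b)`. -/
theorem leafLik_pure_supermultiplicative (ρ1 ρ0 : ℝ) (hρ1 : 0 < ρ1) (hρ0 : 0 < ρ0)
    (a b : ℕ) :
    leafLik ρ1 ρ0 (a + b) 0 ≥ leafLik ρ1 ρ0 a 0 * leafLik ρ1 ρ0 b 0 ∧
    leafLik ρ1 ρ0 0 (a + b) ≥ leafLik ρ1 ρ0 0 a * leafLik ρ1 ρ0 0 b := by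
  have hswap : ∀ n : ℕ, leafLik ρ1 ρ0 0 n = leafLik ρ0 ρ1 n 0 := by
    intro n
    unfold leafLik betaFn
    push_cast
    rw [show (0 : ℝ) + ρ1 + ((n : ℝ) + ρ0) = (n : ℝ) + ρ0 + ((0:ℝ) + ρ1) by ring,
      show ρ1 + ρ0 = ρ0 + ρ1 by ring]
    ring
  constructor
  · rw [leafLik_eq_prod ρ1 ρ0 hρ1 hρ0, leafLik_eq_prod ρ1 ρ0 hρ1 hρ0,
      leafLik_eq_prod ρ1 ρ0 hρ1 hρ0]
    exact prod_super ρ1 ρ0 hρ1 hρ0 a b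
  · rw [hswap, hswap, hswap]
    rw [leafLik_eq_prod ρ0 ρ1 hρ0 hρ1, leafLik_eq_prod ρ0 ρ1 hρ0 hρ1,
      leafLik_eq_prod ρ0 ρ1 hρ0 hρ1]
    exact prod_super ρ0 ρ1 hρ0 hρ1 a b
end

section
/- Fix real hyperparameters ρ¹ > 0, ρ⁰ > 0, α ∈ (0,1], β ≥ 0. Define ℓ(c¹, c⁰) := B(c¹ + ρ¹, c⁰ + ρ⁰) / B(ρ¹, ρ⁰), p_split(d) := α(1+d)^(−β), and the heuristic value H(c¹, c⁰, d) := −max{ log ℓ(c¹, c⁰), log p_split(d) + log ℓ(c¹, 0) + log ℓ(0, c⁰) } for natural numbers c¹, c⁰, d. Then: (i) H(c¹, c⁰, d) ≤ −log ℓ(c¹, c⁰); and (ii) for all natural numbers c¹₀, c¹₁, c⁰₀, c⁰₁ with c¹ = c¹₀ + c¹₁ and c⁰ = c⁰₀ + c⁰₁, and every integer V ≥ 1: H(c¹, c⁰, d) ≤ −log(p_split(d)/V) + H(c¹₀, c⁰₀, d+1) + H(c¹₁, c⁰₁, d+1). -/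
open Finset

lemma myGamma_add_nat (x : ℝ) (hx : 0 < x) (n : ℕ) :
    Real.Gamma (x + n) = Real.Gamma x * ∏ k ∈ range n, (x + k) := by
  induction n with
  | zero => simp
  | succ n ih =>
    have h : x + ((n+1 : ℕ) : ℝ) = (x + n) + 1 := by push_cast; ring
    rw [h, Real.Gamma_add_one (by positivity), ih, prod_range_succ]; ring

lemma leafLik_eq (ρ1 ρ0 : ℝ) (hρ1 : 0 < ρ1) (hρ0 : 0 < ρ0) (a b : ℕ) :
    leafLik ρ1 ρ0 a b =
      (∏ k ∈ range a, (ρ1 + (k:ℝ))) * (∏ k ∈ range b, (ρ0 + (k:ℝ)))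
        / ∏ k ∈ range (a+b), (ρ1 + ρ0 + (k:ℝ)) := by
  have h1 : ((a:ℝ) + ρ1) = ρ1 + (a:ℕ) := by ring
  have h2 : ((b:ℝ) + ρ0) = ρ0 + (b:ℕ) := by ring
  have h3 : ((a:ℝ) + ρ1) + ((b:ℝ) + ρ0) = (ρ1 + ρ0) + ((a+b:ℕ):ℝ) := by push_cast; ring
  unfold leafLik betaFn
  rw [h3, h1, h2, myGamma_add_nat ρ1 hρ1, myGamma_add_nat ρ0 hρ0,
    myGamma_add_nat (ρ1+ρ0) (by positivity)]
  have g1 := Real.Gamma_pos_of_pos hρ1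
  have g0 := Real.Gamma_pos_of_pos hρ0
  have gs := Real.Gamma_pos_of_pos (show (0:ℝ) < ρ1 + ρ0 by positivity)
  field_simp

lemma prodP1_pos (ρ : ℝ) (hρ : 0 < ρ) (a : ℕ) : 0 < ∏ k ∈ range a, (ρ + (k:ℝ)) :=
  Finset.prod_pos fun k _ => by positivity

lemma leafLik_pos (ρ1 ρ0 : ℝ) (hρ1 : 0 < ρ1) (hρ0 : 0 < ρ0) (a b : ℕ) :
    0 < leafLik ρ1 ρ0 a b := by
  rw [leafLik_eq ρ1 ρ0 hρ1 hρ0]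
  have h1 := prodP1_pos ρ1 hρ1 a
  have h2 := prodP1_pos ρ0 hρ0 b
  have h3 := prodP1_pos (ρ1+ρ0) (by positivity) (a+b)
  positivity

lemma Q_mul_le (ρ1 ρ0 : ℝ) (hρ1 : 0 < ρ1) (hρ0 : 0 < ρ0) (a b : ℕ) :
    (∏ k ∈ range a, (ρ1 + ρ0 + (k:ℝ))) * (∏ k ∈ range b, (ρ1 + ρ0 + (k:ℝ)))
      ≤ ∏ k ∈ range (a+b), (ρ1 + ρ0 + (k:ℝ)) := by
  rw [Finset.prod_range_add]
  apply mul_le_mul_of_nonneg_left _ (le_of_lt (prodP1_pos (ρ1+ρ0) (by positivity) a))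
  apply Finset.prod_le_prod (fun k _ => by positivity)
  intro k _
  have : (0:ℝ) ≤ (a:ℝ) := Nat.cast_nonneg a
  push_cast
  linarith

lemma key1 (ρ1 ρ0 : ℝ) (hρ1 : 0 < ρ1) (hρ0 : 0 < ρ0) (a b : ℕ) :
    leafLik ρ1 ρ0 a b ≤ leafLik ρ1 ρ0 a 0 * leafLik ρ1 ρ0 0 b := by
  rw [leafLik_eq ρ1 ρ0 hρ1 hρ0, leafLik_eq ρ1 ρ0 hρ1 hρ0, leafLik_eq ρ1 ρ0 hρ1 hρ0]
  simp only [Finset.range_zero, Finset.prod_empty, Nat.add_zero, Nat.zero_add,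
    mul_one, one_mul]
  rw [div_mul_div_comm]
  have hP1 := prodP1_pos ρ1 hρ1 a
  have hP0 := prodP1_pos ρ0 hρ0 b
  have hQa := prodP1_pos (ρ1+ρ0) (by positivity : (0:ℝ) < ρ1+ρ0) a
  have hQb := prodP1_pos (ρ1+ρ0) (by positivity : (0:ℝ) < ρ1+ρ0) b
  gcongr
  exact Q_mul_le ρ1 ρ0 hρ1 hρ0 a b

lemma leafLik_one (ρ1 ρ0 : ℝ) (hρ1 : 0 < ρ1) (hρ0 : 0 < ρ0) (a : ℕ) :
    leafLik ρ1 ρ0 a 0 = ∏ k ∈ range a, ((ρ1 + (k:ℝ)) / (ρ1 + ρ0 + (k:ℝ))) := by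
  rw [leafLik_eq ρ1 ρ0 hρ1 hρ0]
  simp [Finset.prod_div_distrib]

lemma leafLik_zer (ρ1 ρ0 : ℝ) (hρ1 : 0 < ρ1) (hρ0 : 0 < ρ0) (b : ℕ) :
    leafLik ρ1 ρ0 0 b = ∏ k ∈ range b, ((ρ0 + (k:ℝ)) / (ρ1 + ρ0 + (k:ℝ))) := by
  rw [leafLik_eq ρ1 ρ0 hρ1 hρ0]
  simp [Finset.prod_div_distrib]

lemma key2_gen (ρa ρb : ℝ) (hρa : 0 < ρa) (hρb : 0 < ρb) (a b : ℕ) :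
    (∏ k ∈ range a, ((ρa + (k:ℝ)) / (ρa + ρb + (k:ℝ)))) *
      (∏ k ∈ range b, ((ρa + (k:ℝ)) / (ρa + ρb + (k:ℝ))))
    ≤ ∏ k ∈ range (a+b), ((ρa + (k:ℝ)) / (ρa + ρb + (k:ℝ))) := by
  rw [Finset.prod_range_add]
  apply mul_le_mul_of_nonneg_left _
    (le_of_lt (Finset.prod_pos fun k _ => by positivity))
  apply Finset.prod_le_prod (fun k _ => by positivity)
  intro k _
  rw [div_le_div_iff₀ (by positivity) (by positivity)]
  have ha : (0:ℝ) ≤ (a:ℝ) := Nat.cast_nonneg a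
  have hk : (0:ℝ) ≤ (k:ℝ) := Nat.cast_nonneg k
  push_cast
  nlinarith

lemma key2 (ρ1 ρ0 : ℝ) (hρ1 : 0 < ρ1) (hρ0 : 0 < ρ0) (a b : ℕ) :
    leafLik ρ1 ρ0 a 0 * leafLik ρ1 ρ0 b 0 ≤ leafLik ρ1 ρ0 (a+b) 0 := by
  rw [leafLik_one ρ1 ρ0 hρ1 hρ0, leafLik_one ρ1 ρ0 hρ1 hρ0, leafLik_one ρ1 ρ0 hρ1 hρ0]
  exact key2_gen ρ1 ρ0 hρ1 hρ0 a b

lemma key2' (ρ1 ρ0 : ℝ) (hρ1 : 0 < ρ1) (hρ0 : 0 < ρ0) (a b : ℕ) :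
    leafLik ρ1 ρ0 0 a * leafLik ρ1 ρ0 0 b ≤ leafLik ρ1 ρ0 0 (a+b) := by
  rw [leafLik_zer ρ1 ρ0 hρ1 hρ0, leafLik_zer ρ1 ρ0 hρ1 hρ0, leafLik_zer ρ1 ρ0 hρ1 hρ0]
  have := key2_gen ρ0 ρ1 hρ0 hρ1 a b
  simpa [add_comm ρ0 ρ1] using this

/-- The BCART prior splitting probability `p_split(d) = α(1+d)^(-β)`. -/
noncomputable def pSplit (α β : ℝ) (d : ℕ) : ℝ :=
  α * (1 + (d : ℝ)) ^ (-β)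

/-- The Perfect Split Heuristic value for counts `(c¹, c⁰)` at depth `d`:
`H(c¹,c⁰,d) = -max{log ℓ(c¹,c⁰), log p_split(d) + log ℓ(c¹,0) + log ℓ(0,c⁰)}`. -/
noncomputable def heuristicH (ρ1 ρ0 α β : ℝ) (c1 c0 d : ℕ) : ℝ :=
  -max (Real.log (leafLik ρ1 ρ0 c1 c0))
    (Real.log (pSplit α β d) + Real.log (leafLik ρ1 ρ0 c1 0)
      + Real.log (leafLik ρ1 ρ0 0 c0))

/-- **Consistency of the Perfect Split Heuristic (Theorem 5, numerical content).**
(i) terminal-edge consistency: `H(c¹,c⁰,d) ≤ -log ℓ(c¹,c⁰)`;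
(ii) split-edge consistency: for any split of the counts and any number of valid
feature splits `V ≥ 1`,
`H(c¹,c⁰,d) ≤ -log(p_split(d)/V) + H(c¹₀,c⁰₀,d+1) + H(c¹₁,c⁰₁,d+1)`. -/
theorem perfect_split_heuristic_consistent
    (ρ1 ρ0 α β : ℝ) (hρ1 : 0 < ρ1) (hρ0 : 0 < ρ0)
    (hα0 : 0 < α) (hα1 : α ≤ 1) (hβ : 0 ≤ β) (c1 c0 d : ℕ) :
    (heuristicH ρ1 ρ0 α β c1 c0 d ≤ -Real.log (leafLik ρ1 ρ0 c1 c0)) ∧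
    (∀ c10 c11 c00 c01 : ℕ, c1 = c10 + c11 → c0 = c00 + c01 →
      ∀ V : ℕ, 1 ≤ V →
        heuristicH ρ1 ρ0 α β c1 c0 d
          ≤ -Real.log (pSplit α β d / (V : ℝ))
              + heuristicH ρ1 ρ0 α β c10 c00 (d + 1)
              + heuristicH ρ1 ρ0 α β c11 c01 (d + 1)) := by
  have pSplit_pos : ∀ e : ℕ, 0 < pSplit α β e := by
    intro e
    have : (0:ℝ) < (1 + (e:ℝ)) ^ (-β) :=
      Real.rpow_pos_of_pos (by positivity) _
    unfold pSplit; positivity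
  have pSplit_le_one : ∀ e : ℕ, pSplit α β e ≤ 1 := by
    intro e
    have h1 : (1 + (e:ℝ)) ^ (-β) ≤ 1 :=
      Real.rpow_le_one_of_one_le_of_nonpos
        (by have := Nat.cast_nonneg (α := ℝ) e; linarith) (neg_nonpos.mpr hβ)
    have h2 : (0:ℝ) < (1 + (e:ℝ)) ^ (-β) := Real.rpow_pos_of_pos (by positivity) _
    unfold pSplit; nlinarith
  have Lpos : ∀ a b : ℕ, 0 < leafLik ρ1 ρ0 a b := leafLik_pos ρ1 ρ0 hρ1 hρ0
  constructor
  · exact neg_le_neg (le_max_left _ _)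
  · intro c10 c11 c00 c01 h1 h0 V hV
    subst h1; subst h0
    have branch : ∀ a b : ℕ,
        max (Real.log (leafLik ρ1 ρ0 a b))
          (Real.log (pSplit α β (d+1)) + Real.log (leafLik ρ1 ρ0 a 0)
            + Real.log (leafLik ρ1 ρ0 0 b))
        ≤ Real.log (leafLik ρ1 ρ0 a 0) + Real.log (leafLik ρ1 ρ0 0 b) := by
      intro a b
      apply max_le
      · calc Real.log (leafLik ρ1 ρ0 a b)
            ≤ Real.log (leafLik ρ1 ρ0 a 0 * leafLik ρ1 ρ0 0 b) :=
              Real.log_le_log (Lpos a b) (key1 ρ1 ρ0 hρ1 hρ0 a b)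
          _ = _ := Real.log_mul (Lpos a 0).ne' (Lpos 0 b).ne'
      · have : Real.log (pSplit α β (d+1)) ≤ 0 :=
          Real.log_nonpos (pSplit_pos _).le (pSplit_le_one _)
        linarith
    have hb0 := branch c10 c00
    have hb1 := branch c11 c01
    have m1 : Real.log (leafLik ρ1 ρ0 c10 0) + Real.log (leafLik ρ1 ρ0 c11 0)
        ≤ Real.log (leafLik ρ1 ρ0 (c10+c11) 0) := by
      rw [← Real.log_mul (Lpos c10 0).ne' (Lpos c11 0).ne']
      exact Real.log_le_log (mul_pos (Lpos c10 0) (Lpos c11 0)) (key2 ρ1 ρ0 hρ1 hρ0 c10 c11)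
    have m0 : Real.log (leafLik ρ1 ρ0 0 c00) + Real.log (leafLik ρ1 ρ0 0 c01)
        ≤ Real.log (leafLik ρ1 ρ0 0 (c00+c01)) := by
      rw [← Real.log_mul (Lpos 0 c00).ne' (Lpos 0 c01).ne']
      exact Real.log_le_log (mul_pos (Lpos 0 c00) (Lpos 0 c01)) (key2' ρ1 ρ0 hρ1 hρ0 c00 c01)
    have hV' : Real.log (pSplit α β d / (V:ℝ)) ≤ Real.log (pSplit α β d) := by
      apply Real.log_le_log
      · have hVpos : (0:ℝ) < (V:ℝ) := by exact_mod_cast hV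
        exact div_pos (pSplit_pos d) hVpos
      · exact div_le_self (pSplit_pos d).le (by exact_mod_cast hV)
    have hmax := le_max_right
      (Real.log (leafLik ρ1 ρ0 (c10+c11) (c00+c01)))
      (Real.log (pSplit α β d) + Real.log (leafLik ρ1 ρ0 (c10+c11) 0)
        + Real.log (leafLik ρ1 ρ0 0 (c00+c01)))
    unfold heuristicH
    linarith
end
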